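/- Under a smooth diffeomorphism T : V_w → V_z, the Filippov sliding vector field transforms as the pullback: if W± are the pullbacks of Z± under T, then the sliding vector field of (W⁺, W⁻) with switching function h∘T at w equals DT(w)⁻¹ · Z^sl(T(w)), where Z^sl is the sliding vector field of (Z⁺, Z⁻) with switching function h. -/

import Mathlib

/-- The Filippov sliding vector field transforms as the pullback under a
smooth coordinate change: if `W± (w) = DT(w)⁻¹·Z±(T(w))`, then the sliding vector field
of `(W⁺, W⁻)` with switching function `h∘T` at `w` equals `DT(w)⁻¹·Z^sl(T(w))`;
equivalently, `DT(w)` maps it to `Z^sl(T(w))`. -/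
theorem filippov_sliding_pullback
    (T : (ℝ × ℝ) → ℝ × ℝ) (Vw Vz : Set (ℝ × ℝ))
    (hVw : IsOpen Vw) (hVz : IsOpen Vz)
    (hT : ContDiffOn ℝ (⊤ : ℕ∞) T Vw) (hTmaps : Set.MapsTo T Vw Vz)
    (hTbij : ∀ w ∈ Vw, Function.Bijective (fderiv ℝ T w))
    (Zp Zm : (ℝ × ℝ) → ℝ × ℝ) (h : (ℝ × ℝ) → ℝ)
    (hZp : ContDiffOn ℝ (⊤ : ℕ∞) Zp Vz) (hZm : ContDiffOn ℝ (⊤ : ℕ∞) Zm Vz)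
    (hh : ContDiffOn ℝ (⊤ : ℕ∞) h Vz)
    (Wp Wm : (ℝ × ℝ) → ℝ × ℝ)
    (hWp : ∀ w ∈ Vw, fderiv ℝ T w (Wp w) = Zp (T w))
    (hWm : ∀ w ∈ Vw, fderiv ℝ T w (Wm w) = Zm (T w)) :
    ∀ w ∈ Vw,
      fderiv ℝ h (T w) (Zp (T w)) * fderiv ℝ h (T w) (Zm (T w)) < 0 →
      fderiv ℝ T w
          (((fderiv ℝ (h ∘ T) w (Wp w) - fderiv ℝ (h ∘ T) w (Wm w))⁻¹) •
            (fderiv ℝ (h ∘ T) w (Wp w) • Wm w - fderiv ℝ (h ∘ T) w (Wm w) • Wp w)) =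
        ((fderiv ℝ h (T w) (Zp (T w)) - fderiv ℝ h (T w) (Zm (T w)))⁻¹) •
          (fderiv ℝ h (T w) (Zp (T w)) • Zm (T w) -
            fderiv ℝ h (T w) (Zm (T w)) • Zp (T w)) := by
  intro w hw _
  have hTd : DifferentiableAt ℝ T w :=
    (hT.contDiffAt (hVw.mem_nhds hw)).differentiableAt (by simp)
  have hhd : DifferentiableAt ℝ h (T w) :=
    (hh.contDiffAt (hVz.mem_nhds (hTmaps hw))).differentiableAt (by simp)
  have hchain : fderiv ℝ (h ∘ T) w = (fderiv ℝ h (T w)).comp (fderiv ℝ T w) :=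
    fderiv_comp w hhd hTd
  have hp : fderiv ℝ (h ∘ T) w (Wp w) = fderiv ℝ h (T w) (Zp (T w)) := by
    rw [hchain]; simp [hWp w hw]
  have hm : fderiv ℝ (h ∘ T) w (Wm w) = fderiv ℝ h (T w) (Zm (T w)) := by
    rw [hchain]; simp [hWm w hw]
  rw [hp, hm, map_smul, map_sub, map_smul, map_smul, hWp w hw, hWm w hw]
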